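/- Let π be a Poisson tensor on ℝ^N, c a Casimir function for π, v and w Poisson vector fields for π with [v,w] = 0, and λ ∈ ℝ. If c' is a Casimir function for π with ∑_i v^i ∂c'/∂x^i = 0 and ∑_i w^i ∂c'/∂x^i = 0 everywhere, then c'∘q and l_dc' are Casimir functions for each of the three bivector fields π_TM + λ c (v_V ∧ w_V), π_TM + λ c (v_C ∧ w_V), and π_TM + λ c (v_C ∧ w_C) on ℝ^N × ℝ^N (where λ c denotes pointwise multiplication by λ c(x)). -/

import Mathlib

open scoped BigOperators

/-- Partial derivative of `f : ℝ^N → ℝ` in the `s`-th coordinate direction. -/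
noncomputable def pd {N : ℕ} (f : (Fin N → ℝ) → ℝ) (s : Fin N) (x : Fin N → ℝ) : ℝ :=
  fderiv ℝ f x (Pi.single s 1)

/-- Coordinate direction on `ℝ^N × ℝ^N` indexed by `Fin N ⊕ Fin N`. -/
noncomputable def dir (N : ℕ) (a : Fin N ⊕ Fin N) : (Fin N → ℝ) × (Fin N → ℝ) :=
  Sum.elim (fun i => (Pi.single i 1, 0)) (fun i => (0, Pi.single i 1)) a

/-- Partial derivative on `ℝ^N × ℝ^N` in the `a`-th coordinate direction. -/
noncomputable def pdT {N : ℕ} (F : (Fin N → ℝ) × (Fin N → ℝ) → ℝ)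
    (a : Fin N ⊕ Fin N) (z : (Fin N → ℝ) × (Fin N → ℝ)) : ℝ :=
  fderiv ℝ F z (dir N a)

/-- `π` is a Poisson tensor on `ℝ^N`: a smooth antisymmetric bivector field
satisfying the Jacobi identity. -/
def IsPoisson {N : ℕ} (π : (Fin N → ℝ) → Matrix (Fin N) (Fin N) ℝ) : Prop :=
  (∀ i j, ContDiff ℝ (⊤ : ℕ∞) fun x => π x i j) ∧
  (∀ x i j, π x j i = - π x i j) ∧
  (∀ x i j k, ∑ s, (π x i s * pd (fun x => π x j k) s x
      + π x j s * pd (fun x => π x k i) s x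
      + π x k s * pd (fun x => π x i j) s x) = 0)

/-- `v` is a (smooth) Poisson vector field for `π` (i.e. `L_v π = 0`). -/
def IsPoissonVF {N : ℕ} (π : (Fin N → ℝ) → Matrix (Fin N) (Fin N) ℝ)
    (v : (Fin N → ℝ) → Fin N → ℝ) : Prop :=
  (∀ i, ContDiff ℝ (⊤ : ℕ∞) fun x => v x i) ∧
  (∀ x i j, ∑ s, (pd (fun x => π x i j) s x * v x s
      - π x s j * pd (fun x => v x i) s x
      - π x i s * pd (fun x => v x j) s x) = 0)

/-- The tangent lift `π_TM` of `π` to `ℝ^N × ℝ^N`. -/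
noncomputable def tlift {N : ℕ} (π : (Fin N → ℝ) → Matrix (Fin N) (Fin N) ℝ)
    (z : (Fin N → ℝ) × (Fin N → ℝ)) : Matrix (Fin N ⊕ Fin N) (Fin N ⊕ Fin N) ℝ :=
  Matrix.of fun a b =>
    match a, b with
    | Sum.inl _, Sum.inl _ => 0
    | Sum.inl i, Sum.inr j => π z.1 i j
    | Sum.inr i, Sum.inl j => π z.1 i j
    | Sum.inr i, Sum.inr j => ∑ s, pd (fun x => π x i j) s z.1 * z.2 s

/-- The complete lift `v_C` of a vector field `v`. -/
noncomputable def liftC {N : ℕ} (v : (Fin N → ℝ) → Fin N → ℝ)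
    (z : (Fin N → ℝ) × (Fin N → ℝ)) : Fin N ⊕ Fin N → ℝ :=
  Sum.elim (fun i => v z.1 i) (fun i => ∑ s, pd (fun x => v x i) s z.1 * z.2 s)

/-- The vertical lift `v_V` of a vector field `v`. -/
def liftV {N : ℕ} (v : (Fin N → ℝ) → Fin N → ℝ)
    (z : (Fin N → ℝ) × (Fin N → ℝ)) : Fin N ⊕ Fin N → ℝ :=
  Sum.elim (fun _ => 0) (fun i => v z.1 i)

/-- The wedge `u ∧ w` of two vector fields, as a bivector field. -/
def wedge {Z ι : Type*} (u w : Z → ι → ℝ) (z : Z) : Matrix ι ι ℝ :=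
  Matrix.of fun a b => u z a * w z b - u z b * w z a

/-- A Poisson tensor on `ℝ^N × ℝ^N`: a smooth antisymmetric bivector field
satisfying the Jacobi identity. -/
def IsPoissonT {N : ℕ}
    (P : (Fin N → ℝ) × (Fin N → ℝ) → Matrix (Fin N ⊕ Fin N) (Fin N ⊕ Fin N) ℝ) : Prop :=
  (∀ a b, ContDiff ℝ (⊤ : ℕ∞) fun z => P z a b) ∧
  (∀ z a b, P z b a = - P z a b) ∧
  (∀ z a b c, ∑ s, (P z a s * pdT (fun z => P z b c) s z
      + P z b s * pdT (fun z => P z c a) s z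
      + P z c s * pdT (fun z => P z a b) s z) = 0)

/-- `c` is a Casimir function for `π` on `ℝ^N`. -/
def IsCasimir {N : ℕ} (π : (Fin N → ℝ) → Matrix (Fin N) (Fin N) ℝ)
    (c : (Fin N → ℝ) → ℝ) : Prop :=
  ContDiff ℝ (⊤ : ℕ∞) c ∧ ∀ x j, ∑ i, pd c i x * π x i j = 0

/-- `F` is a Casimir function for the bivector field `P` on `ℝ^N × ℝ^N`. -/
def IsCasimirT {N : ℕ}
    (P : (Fin N → ℝ) × (Fin N → ℝ) → Matrix (Fin N ⊕ Fin N) (Fin N ⊕ Fin N) ℝ)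
    (F : (Fin N → ℝ) × (Fin N → ℝ) → ℝ) : Prop :=
  ∀ z b, ∑ a, pdT F a z * P z a b = 0

/-- `f ∘ q : ℝ^N × ℝ^N → ℝ`. -/
def fq {N : ℕ} (f : (Fin N → ℝ) → ℝ) (z : (Fin N → ℝ) × (Fin N → ℝ)) : ℝ := f z.1

/-- The fiber-wise linear function `l_{df}` on `ℝ^N × ℝ^N`. -/
noncomputable def ldf {N : ℕ} (f : (Fin N → ℝ) → ℝ) (z : (Fin N → ℝ) × (Fin N → ℝ)) : ℝ :=
  ∑ s, pd f s z.1 * z.2 s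

/-- The commutator `[v,w]` of two vector fields on `ℝ^N`. -/
noncomputable def vbr {N : ℕ} (v w : (Fin N → ℝ) → Fin N → ℝ)
    (x : Fin N → ℝ) (i : Fin N) : ℝ :=
  ∑ s, (v x s * pd (fun x => w x i) s x - w x s * pd (fun x => v x i) s x)

lemma contDiff_pd {N : ℕ} {f : (Fin N → ℝ) → ℝ} (hf : ContDiff ℝ (⊤ : ℕ∞) f) (s : Fin N) :
    ContDiff ℝ (⊤ : ℕ∞) fun x => pd f s x := by
  have h1 : ContDiff ℝ (⊤ : ℕ∞) (fderiv ℝ f) := hf.fderiv_right (by exact (by simp))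
  exact h1.clm_apply contDiff_const

lemma pd_pd_comm {N : ℕ} {f : (Fin N → ℝ) → ℝ} (hf : ContDiff ℝ (⊤ : ℕ∞) f) (i s : Fin N)
    (x : Fin N → ℝ) : pd (fun x => pd f s x) i x = pd (fun x => pd f i x) s x := by
  have hd : Differentiable ℝ f := hf.differentiable (by simp)
  have hd2 : Differentiable ℝ (fderiv ℝ f) :=
    (hf.fderiv_right (m := (⊤ : ℕ∞)) (by exact (by simp))).differentiable (by simp)
  have key : ∀ (j : Fin N) (w : Fin N → ℝ),
      pd (fun x => fderiv ℝ f x w) j x = fderiv ℝ (fderiv ℝ f) x (Pi.single j 1) w := by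
    intro j w
    unfold pd
    rw [fderiv_clm_apply (hd2 x) (differentiableAt_const w)]
    simp
  show pd (fun x => fderiv ℝ f x (Pi.single s 1)) i x
      = pd (fun x => fderiv ℝ f x (Pi.single i 1)) s x
  rw [key i (Pi.single s 1), key s (Pi.single i 1),
    second_derivative_symmetric (fun y => (hd y).hasFDerivAt) (hd2 x).hasFDerivAt _ _]

lemma fderiv_fst_comp {N : ℕ} {f : (Fin N → ℝ) → ℝ} (hf : Differentiable ℝ f)
    (z : (Fin N → ℝ) × (Fin N → ℝ)) (u : (Fin N → ℝ) × (Fin N → ℝ)) :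
    fderiv ℝ (fun z : (Fin N → ℝ) × (Fin N → ℝ) => f z.1) z u = fderiv ℝ f z.1 u.1 := by
  have ht : HasFDerivAt (fun z : (Fin N → ℝ) × (Fin N → ℝ) => f z.1)
      ((fderiv ℝ f z.1).comp (ContinuousLinearMap.fst ℝ (Fin N → ℝ) (Fin N → ℝ))) z :=
    HasFDerivAt.comp z (hf z.1).hasFDerivAt hasFDerivAt_fst
  rw [ht.fderiv]
  rfl

lemma pdT_fq_inl {N : ℕ} {f : (Fin N → ℝ) → ℝ} (hf : ContDiff ℝ (⊤ : ℕ∞) f) (i : Fin N)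
    (z : (Fin N → ℝ) × (Fin N → ℝ)) : pdT (fq f) (Sum.inl i) z = pd f i z.1 := by
  unfold pdT fq pd
  rw [fderiv_fst_comp (hf.differentiable (by simp))]
  rfl

lemma pdT_fq_inr {N : ℕ} {f : (Fin N → ℝ) → ℝ} (hf : ContDiff ℝ (⊤ : ℕ∞) f) (i : Fin N)
    (z : (Fin N → ℝ) × (Fin N → ℝ)) : pdT (fq f) (Sum.inr i) z = 0 := by
  unfold pdT fq
  rw [fderiv_fst_comp (hf.differentiable (by simp))]
  show fderiv ℝ f z.1 0 = 0
  simp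

lemma snd_apply_hasFDeriv {N : ℕ} (s : Fin N) (z : (Fin N → ℝ) × (Fin N → ℝ)) :
    HasFDerivAt (fun z : (Fin N → ℝ) × (Fin N → ℝ) => z.2 s)
      ((ContinuousLinearMap.proj s).comp (ContinuousLinearMap.snd ℝ (Fin N → ℝ) (Fin N → ℝ))) z :=
  ((ContinuousLinearMap.proj s).comp
    (ContinuousLinearMap.snd ℝ (Fin N → ℝ) (Fin N → ℝ))).hasFDerivAt

lemma diff_summand {N : ℕ} {f : (Fin N → ℝ) → ℝ} (hf : ContDiff ℝ (⊤ : ℕ∞) f) (s : Fin N) :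
    Differentiable ℝ (fun z : (Fin N → ℝ) × (Fin N → ℝ) => pd f s z.1 * z.2 s) := by
  have h1 : Differentiable ℝ (fun x => pd f s x) := (contDiff_pd hf s).differentiable (by simp)
  exact (h1.comp differentiable_fst).mul ((snd_apply_hasFDeriv s · |>.differentiableAt))

lemma pdT_ldf_apply {N : ℕ} {f : (Fin N → ℝ) → ℝ} (hf : ContDiff ℝ (⊤ : ℕ∞) f) (a : Fin N ⊕ Fin N)
    (z : (Fin N → ℝ) × (Fin N → ℝ)) :
    pdT (ldf f) a z = ∑ s, (pd f s z.1 * (dir N a).2 s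
      + z.2 s * fderiv ℝ (fun z : (Fin N → ℝ) × (Fin N → ℝ) => pd f s z.1) z (dir N a)) := by
  unfold pdT ldf
  rw [fderiv_fun_sum (fun s _ => (diff_summand hf s) z)]
  rw [ContinuousLinearMap.sum_apply]
  refine Finset.sum_congr rfl fun s _ => ?_
  have h1 : DifferentiableAt ℝ (fun z : (Fin N → ℝ) × (Fin N → ℝ) => pd f s z.1) z :=
    (((contDiff_pd hf s).differentiable (by simp)).comp differentiable_fst) z
  have h2 : DifferentiableAt ℝ (fun z : (Fin N → ℝ) × (Fin N → ℝ) => z.2 s) z :=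
    (snd_apply_hasFDeriv s z).differentiableAt
  rw [fderiv_fun_mul h1 h2]
  rw [(snd_apply_hasFDeriv s z).fderiv]
  simp only [ContinuousLinearMap.add_apply, ContinuousLinearMap.smul_apply, smul_eq_mul,
    ContinuousLinearMap.coe_comp', Function.comp_apply, ContinuousLinearMap.coe_snd',
    ContinuousLinearMap.proj_apply]

lemma pdT_ldf_inl {N : ℕ} {f : (Fin N → ℝ) → ℝ} (hf : ContDiff ℝ (⊤ : ℕ∞) f) (i : Fin N)
    (z : (Fin N → ℝ) × (Fin N → ℝ)) :
    pdT (ldf f) (Sum.inl i) z = ∑ s, pd (fun x => pd f i x) s z.1 * z.2 s := by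
  rw [pdT_ldf_apply hf]
  refine Finset.sum_congr rfl fun s _ => ?_
  have h1 : Differentiable ℝ (fun x => pd f s x) := (contDiff_pd hf s).differentiable (by simp)
  rw [fderiv_fst_comp h1]
  show pd f s z.1 * (0 : Fin N → ℝ) s + z.2 s * pd (fun x => pd f s x) i z.1 = _
  rw [pd_pd_comm hf i s]
  simp [mul_comm]

lemma pdT_ldf_inr {N : ℕ} {f : (Fin N → ℝ) → ℝ} (hf : ContDiff ℝ (⊤ : ℕ∞) f) (j : Fin N)
    (z : (Fin N → ℝ) × (Fin N → ℝ)) :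
    pdT (ldf f) (Sum.inr j) z = pd f j z.1 := by
  rw [pdT_ldf_apply hf]
  have h0 : ∀ s, fderiv ℝ (fun z : (Fin N → ℝ) × (Fin N → ℝ) => pd f s z.1) z
      (dir N (Sum.inr j)) = 0 := by
    intro s
    have h1 : Differentiable ℝ (fun x => pd f s x) := (contDiff_pd hf s).differentiable (by simp)
    rw [fderiv_fst_comp h1]
    show fderiv ℝ (fun x => pd f s x) z.1 0 = 0
    simp
  simp only [h0, mul_zero, add_zero]
  simp [dir, Pi.single_apply, mul_ite]

lemma pd_of_sum_mul_zero {N : ℕ} {a b : Fin N → (Fin N → ℝ) → ℝ}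
    (ha : ∀ i, Differentiable ℝ (a i)) (hb : ∀ i, Differentiable ℝ (b i))
    (H : ∀ x, ∑ i, a i x * b i x = 0) (s : Fin N) (x : Fin N → ℝ) :
    ∑ i, (pd (a i) s x * b i x + a i x * pd (b i) s x) = 0 := by
  have hz : pd (fun x => ∑ i, a i x * b i x) s x = 0 := by
    have he : (fun x : Fin N → ℝ => ∑ i, a i x * b i x) = fun _ => (0:ℝ) := funext H
    rw [pd, he, fderiv_fun_const]
    simp
  rw [pd, fderiv_fun_sum (fun i _ => ((ha i x).fun_mul (hb i x)))] at hz
  rw [ContinuousLinearMap.sum_apply] at hz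
  rw [← hz]
  refine Finset.sum_congr rfl fun i _ => ?_
  rw [fderiv_fun_mul (ha i x) (hb i x)]
  simp only [ContinuousLinearMap.add_apply, ContinuousLinearMap.smul_apply, smul_eq_mul]
  unfold pd
  ring

lemma derived_identity {N : ℕ} {a b : Fin N → (Fin N → ℝ) → ℝ}
    (ha : ∀ i, Differentiable ℝ (a i)) (hb : ∀ i, Differentiable ℝ (b i))
    (H : ∀ x, ∑ i, a i x * b i x = 0) (x y : Fin N → ℝ) :
    ∑ i, ((∑ s, pd (a i) s x * y s) * b i x + a i x * (∑ s, pd (b i) s x * y s)) = 0 := by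
  have step : ∀ i, (∑ s, pd (a i) s x * y s) * b i x + a i x * (∑ s, pd (b i) s x * y s)
      = ∑ s, (pd (a i) s x * b i x + a i x * pd (b i) s x) * y s := by
    intro i
    rw [Finset.sum_mul, Finset.mul_sum, ← Finset.sum_add_distrib]
    exact Finset.sum_congr rfl fun s _ => by ring
  rw [Finset.sum_congr rfl (fun i _ => step i), Finset.sum_comm]
  refine Finset.sum_eq_zero fun s _ => ?_
  rw [← Finset.sum_mul, pd_of_sum_mul_zero ha hb H s x, zero_mul]

lemma combo3 {N : ℕ} (f g h : Fin N → ℝ) (A B C : ℝ) {e : Fin N → ℝ}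
    (hf : ∑ i, f i = 0) (hg : ∑ i, g i = 0) (hh : ∑ i, h i = 0)
    (he : ∀ i, e i = f i * A + g i * B + h i * C) :
    ∑ i, e i = 0 := by
  calc ∑ i, e i = ∑ i, (f i * A + g i * B + h i * C) :=
        Finset.sum_congr rfl fun i _ => he i
    _ = (∑ i, f i) * A + (∑ i, g i) * B + (∑ i, h i) * C := by
        rw [Finset.sum_add_distrib, Finset.sum_add_distrib, Finset.sum_mul, Finset.sum_mul,
          Finset.sum_mul]
    _ = 0 := by rw [hf, hg, hh]; ring

/-- if `c'` is a Casimir function for `π` annihilated by both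
commuting Poisson vector fields `v` and `w`, then `c'∘q` and `l_dc'` are
Casimir functions for each of the three deformed tensors. -/
theorem casimirs_of_three_deformations {N : ℕ}
    (π : (Fin N → ℝ) → Matrix (Fin N) (Fin N) ℝ) (c : (Fin N → ℝ) → ℝ)
    (v w : (Fin N → ℝ) → Fin N → ℝ) (l : ℝ) (c' : (Fin N → ℝ) → ℝ)
    (hπ : IsPoisson π) (hc : IsCasimir π c)
    (hv : IsPoissonVF π v) (hw : IsPoissonVF π w)
    (hbr : ∀ x i, vbr v w x i = 0)
    (hc' : IsCasimir π c')
    (hvc' : ∀ x, ∑ i, v x i * pd c' i x = 0)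
    (hwc' : ∀ x, ∑ i, w x i * pd c' i x = 0) :
    (IsCasimirT (fun z => tlift π z + (l * c z.1) • wedge (liftV v) (liftV w) z) (fq c') ∧
     IsCasimirT (fun z => tlift π z + (l * c z.1) • wedge (liftV v) (liftV w) z) (ldf c')) ∧
    (IsCasimirT (fun z => tlift π z + (l * c z.1) • wedge (liftC v) (liftV w) z) (fq c') ∧
     IsCasimirT (fun z => tlift π z + (l * c z.1) • wedge (liftC v) (liftV w) z) (ldf c')) ∧
    (IsCasimirT (fun z => tlift π z + (l * c z.1) • wedge (liftC v) (liftC w) z) (fq c') ∧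
     IsCasimirT (fun z => tlift π z + (l * c z.1) • wedge (liftC v) (liftC w) z) (ldf c')) := by
  
  have hcd : ContDiff ℝ (⊤ : ℕ∞) c' := hc'.1
  have hB : ∀ i, Differentiable ℝ (fun x => pd c' i x) :=
    fun i => (contDiff_pd hcd i).differentiable (by simp)
  have hvD : ∀ i, Differentiable ℝ (fun x => v x i) := fun i => (hv.1 i).differentiable (by simp)
  have hwD : ∀ i, Differentiable ℝ (fun x => w x i) := fun i => (hw.1 i).differentiable (by simp)
  have hπD : ∀ i j, Differentiable ℝ (fun x => π x i j) :=
    fun i j => (hπ.1 i j).differentiable (by simp)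
  have I1 : ∀ (x y : Fin N → ℝ) (j : Fin N), ∑ i, ((∑ s, pd (fun x => pd c' i x) s x * y s)
      * π x i j + pd c' i x * (∑ s, pd (fun x => π x i j) s x * y s)) = 0 :=
    fun x y j => derived_identity hB (fun i => hπD i j) (fun x => hc'.2 x j) x y
  have I2v : ∀ x y : Fin N → ℝ, ∑ i, ((∑ s, pd (fun x => v x i) s x * y s) * pd c' i x
      + v x i * (∑ s, pd (fun x => pd c' i x) s x * y s)) = 0 :=
    fun x y => derived_identity hvD hB hvc' x y
  have I2w : ∀ x y : Fin N → ℝ, ∑ i, ((∑ s, pd (fun x => w x i) s x * y s) * pd c' i x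
      + w x i * (∑ s, pd (fun x => pd c' i x) s x * y s)) = 0 :=
    fun x y => derived_identity hwD hB hwc' x y
  refine ⟨⟨?_, ?_⟩, ⟨?_, ?_⟩, ⟨?_, ?_⟩⟩ <;>
  [skip; skip; skip; skip; skip; skip] <;>
  (intro z b
   obtain ⟨x, y⟩ := z
   rw [Fintype.sum_sum_type]
   cases b <;> rename_i j <;>
     simp only [pdT_fq_inl hcd, pdT_fq_inr hcd, pdT_ldf_inl hcd, pdT_ldf_inr hcd,
       Matrix.add_apply, Matrix.smul_apply, smul_eq_mul, tlift, wedge, liftC, liftV,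
       Matrix.of_apply, Sum.elim_inl, Sum.elim_inr] <;>
     rw [← Finset.sum_add_distrib])
  -- VV, fq, inl
  · exact combo3 _ _ _ 0 0 0 (hc'.2 x j) (hc'.2 x j) (hc'.2 x j) (fun i => by ring)
  -- VV, fq, inr
  · exact combo3 _ _ _ 1 0 0 (hc'.2 x j) (hc'.2 x j) (hc'.2 x j) (fun i => by ring)
  -- VV, ldf, inl
  · exact combo3 _ _ _ 1 0 0 (hc'.2 x j) (hc'.2 x j) (hc'.2 x j) (fun i => by ring)
  -- VV, ldf, inr
  · exact combo3 _ _ _ 1 (l * c x * w x j) (-(l * c x * v x j)) (I1 x y j) (hvc' x) (hwc' x)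
      (fun i => by ring)
  -- CV, fq, inl
  · exact combo3 _ _ _ 0 0 0 (hc'.2 x j) (hc'.2 x j) (hc'.2 x j) (fun i => by ring)
  -- CV, fq, inr
  · exact combo3 _ _ _ 1 (l * c x * w x j) 0 (hc'.2 x j) (hvc' x) (hwc' x) (fun i => by ring)
  -- CV, ldf, inl
  · exact combo3 _ _ _ 1 (-(l * c x * v x j)) 0 (hc'.2 x j) (hwc' x) (hwc' x) (fun i => by ring)
  -- CV, ldf, inr
  · exact combo3 _ _ _ 1 (l * c x * w x j)
      (-(l * c x * ∑ s, pd (fun x => v x j) s x * y s)) (I1 x y j) (I2v x y) (hwc' x)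
      (fun i => by ring)
  -- CC, fq, inl
  · exact combo3 _ _ _ (l * c x * w x j) (-(l * c x * v x j)) 0 (hvc' x) (hwc' x) (hwc' x)
      (fun i => by ring)
  -- CC, fq, inr
  · exact combo3 _ _ _ 1 (l * c x * ∑ s, pd (fun x => w x j) s x * y s)
      (-(l * c x * ∑ s, pd (fun x => v x j) s x * y s)) (hc'.2 x j) (hvc' x) (hwc' x)
      (fun i => by ring)
  -- CC, ldf, inl
  · exact combo3 _ _ _ 1 (l * c x * w x j) (-(l * c x * v x j)) (hc'.2 x j) (I2v x y) (I2w x y)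
      (fun i => by ring)
  -- CC, ldf, inr
  · exact combo3 _ _ _ 1 (l * c x * ∑ s, pd (fun x => w x j) s x * y s)
      (-(l * c x * ∑ s, pd (fun x => v x j) s x * y s)) (I1 x y j) (I2v x y) (I2w x y)
      (fun i => by ring)
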